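/- The map φ : X → Y/∼ is a homeomorphism, where Y = φ(X) ⊂ [0,1] × ℝ carries the Euclidean topology and Y/∼ the quotient topology. -/

import Mathlib

/-- `T : ℝ → ℝ` is a unimodal map on `[0,1]` with critical point `c`. -/
def IsUnimodal (T : ℝ → ℝ) (c : ℝ) : Prop :=
  ContinuousOn T (Set.Icc 0 1) ∧ Set.MapsTo T (Set.Icc 0 1) (Set.Icc 0 1) ∧
    T 0 = 0 ∧ 0 < c ∧ c < 1 ∧
    StrictMonoOn T (Set.Icc 0 c) ∧ StrictAntiOn T (Set.Icc c 1)

-- Symbols `0, *, 1` are encoded as `(0 : Fin 3), (1 : Fin 3), (2 : Fin 3)`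
-- respectively; this realizes the order `0 < * < 1`.
open Classical in
/-- The raw (unmodified) itinerary of `x`: the `n`-th symbol is `0` if `Tⁿ(x) < c`,
`*` if `Tⁿ(x) = c` and `1` if `Tⁿ(x) > c`. -/
noncomputable def rawItin (T : ℝ → ℝ) (c : ℝ) (x : ℝ) : ℕ → Fin 3 := fun n =>
  if T^[n] x < c then 0 else if T^[n] x = c then 1 else 2

/-- The number of `1`s among the first `k` symbols of `s`. -/
def onesCount (s : ℕ → Fin 3) (k : ℕ) : ℕ :=
  ((Finset.range k).filter fun i => s i = 2).card

/-- The (strict) parity-lexicographical ordering on `{0,*,1}^ℕ`. -/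
def PlexLt (s t : ℕ → Fin 3) : Prop :=
  ∃ k : ℕ, (∀ i < k, s i = t i) ∧ s k ≠ t k ∧
    ((s k < t k ∧ Even (onesCount s k)) ∨ (t k < s k ∧ Odd (onesCount s k)))

/-- The parity-lexicographical ordering `⪯`. -/
def PlexLe (s t : ℕ → Fin 3) : Prop := PlexLt s t ∨ s = t

open Classical in
/-- The (modified) kneading sequence `ν = c₁c₂… = I(T(c))`: if the critical point is
periodic, so that the raw itinerary of `T(c)` contains `*` (first at index `n-1`, whence it
is `(c₁…c_{n-1}*)^∞`), then `ν` is the parity-lexicographically smaller of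
`(c₁…c_{n-1}0)^∞` and `(c₁…c_{n-1}1)^∞`. -/
noncomputable def kneading (T : ℝ → ℝ) (c : ℝ) : ℕ → Fin 3 :=
  if h : ∃ i, rawItin T c (T c) i = 1 then
    let n := Nat.find h + 1
    let w : Fin 3 → ℕ → Fin 3 := fun b j =>
      if j % n = n - 1 then b else rawItin T c (T c) (j % n)
    if PlexLe (w 0) (w 2) then w 0 else w 2
  else rawItin T c (T c)

open Classical in
/-- The modified itinerary of `x`: it agrees with the raw itinerary up to the first
occurrence of `*` (if any), and after that first `*` it continues with the modified
kneading sequence `ν`. -/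
noncomputable def itin (T : ℝ → ℝ) (c : ℝ) (x : ℝ) : ℕ → Fin 3 :=
  if h : ∃ i, T^[i] x = c then
    fun n =>
      if n < Nat.find h then rawItin T c x n
      else if n = Nat.find h then 1
      else kneading T c (n - Nat.find h - 1)
  else rawItin T c x


/-- The inverse limit `X = lim←([0,1], T)`, modelled as sequences
`x : ℕ → ℝ` where `x n` represents the coordinate `x_{-n}`. -/
def invLimitSet (T : ℝ → ℝ) : Set (ℕ → ℝ) :=
  {x | (∀ n, x n ∈ Set.Icc (0 : ℝ) 1) ∧ ∀ n, T (x (n + 1)) = x n}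

/-- `#_1(s_{-k}…s_{-1})`: the number of `1`s among the first `k` entries (from the
right) of a left-infinite sequence `s ∈ {0,1}^{-ℕ}`, modelled as `s : ℕ → Bool` with
`s i` representing `s_{-(i+1)}`. -/
def numOnes (s : ℕ → Bool) (k : ℕ) : ℕ :=
  ((Finset.range k).filter fun i => s i = true).card

/-- The map `ψ_L : {0,1}^{-ℕ} → ℝ`,
`ψ_L(s) = 1/2 + Σ_{i=1}^∞ (-1)^{#_1(l_{-i}…l_{-1}) - #_1(s_{-i}…s_{-1})} · 3^{-i}`. -/
noncomputable def psiL (L : ℕ → Bool) (s : ℕ → Bool) : ℝ :=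
  1 / 2 + ∑' i : ℕ,
    (-1 : ℝ) ^ ((numOnes L (i + 1) : ℤ) - (numOnes s (i + 1) : ℤ)) * (3 : ℝ) ^ (-(i + 1 : ℤ))

/-- Conversion of a symbol in `{0,*,1}` to a Boolean (`1 ↦ true`, otherwise `false`);
it is only ever applied to entries of the modified kneading sequence, which contains
no `*`. -/
def f2b (v : Fin 3) : Bool := v == 2

open Classical in
/-- `φ(x)`: the point (or pair of points) of `[0,1] × ℝ` assigned to `x ∈ X`.
Writing `s_{-(i+1)} = ν_{-(i+1)}(x)` for the modified itinerary of the left tail of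
`x`: if no coordinate `x_{-(i+1)}` equals `c`, then `φ(x)` is the single point
`(x₀, ψ_L(s))`; if some (but finitely many) coordinates equal `c`, the modified
itinerary has a single `*` (at the deepest such index), the entries following the `*`
are those of the kneading sequence `ν`, and `φ(x)` is the pair of points obtained by
replacing the `*` by `0` and by `1`; if infinitely many coordinates equal `c` (the
fully periodic case `(c₁…c_{n-1}*)^ℤ`), the itinerary is replaced by the single
modified periodic itinerary `(c₁…c_n)^ℤ`. -/
noncomputable def phiSet (T : ℝ → ℝ) (c : ℝ) (L : ℕ → Bool) (x : ℕ → ℝ) :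
    Set (ℝ × ℝ) :=
  if hP : {i : ℕ | x (i + 1) = c}.Finite ∧ {i : ℕ | x (i + 1) = c}.Nonempty then
    let imax : ℕ := hP.1.toFinset.max' ((Set.Finite.toFinset_nonempty hP.1).mpr hP.2)
    let base : Bool → ℕ → Bool := fun b i =>
      if i < imax then f2b (kneading T c (imax - 1 - i))
      else if i = imax then b
      else decide (c < x (i + 1))
    {(x 0, psiL L (base false)), (x 0, psiL L (base true))}
  else if {i : ℕ | x (i + 1) = c}.Infinite then
    if hper : ∃ m, rawItin T c (T c) m = 1 then
      let n : ℕ := Nat.find hper + 1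
      let i0 : ℕ := sInf {i : ℕ | x (i + 1) = c}
      {(x 0, psiL L fun i => f2b (kneading T c (((i0 : ℤ) - i - 1) % (n : ℤ)).toNat))}
    else ∅
  else
    {(x 0, psiL L fun i => decide (c < x (i + 1)))}

/-- `Y = φ(X) ⊆ [0,1] × ℝ`, with the Euclidean (subspace) topology. -/
def phiImage (T : ℝ → ℝ) (c : ℝ) (L : ℕ → Bool) : Set (ℝ × ℝ) :=
  ⋃ x ∈ invLimitSet T, phiSet T c L x

/-- The identification on `Y`: `a ∼ b` iff `a, b ∈ φ(x)` for some `x ∈ X`.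
The quotient `Y/∼` is `Quot` of this relation, with the quotient topology. -/
def phiRel (T : ℝ → ℝ) (c : ℝ) (L : ℕ → Bool)
    (a b : ↥(phiImage T c L)) : Prop :=
  ∃ x ∈ invLimitSet T, (a : ℝ × ℝ) ∈ phiSet T c L x ∧ (b : ℝ × ℝ) ∈ phiSet T c L x

/-!
A point `x` of the inverse limit together with a choice of symbols `s` is *admissible* when each
symbol records the side of `c` on which the corresponding coordinate lies (a coordinate equal to
`c` gets the symbol that the modified kneading sequence puts in place of `*`), except at the
deepest coordinate equal to `c`, whose symbol is free; then `φ(x)` is the set of points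
`(x₀, ψ_L(s))` with `s` admissible. The admissible pairs form a compact set `K`. The only delicate point in its
closedness is a coordinate equal to `c` followed by a deeper one: then `c` is periodic, and near
`c` the return map `T^n` lands on the side of `c` that the modified kneading sequence records in
place of `*`.

Both `K → X` and `K → Y`, `(x, s) ↦ (x₀, ψ_L(s))`, are continuous surjections. Since `ψ_L` is
injective (a signed ternary expansion) and `T` is injective on each lap, the image in `Y`
determines the point of `X`. As `K` is compact, `K → Y` is a quotient map, so `K → X` descends
to a continuous bijection `Y/∼ → X` from a compact space onto a Hausdorff one.
-/

open Function Set Filter Topology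

/-- The first differing term outweighs all later ones, since `2 r < 1`. -/
lemma eq_of_tsum_eq_of_abs_eq_pow {a b : ℕ → ℝ} {r : ℝ} (hr : 0 < r) (hr2 : 2 * r < 1)
    (ha : ∀ i, |a i| = r ^ (i + 1)) (hb : ∀ i, |b i| = r ^ (i + 1))
    (hab : ∑' i, a i = ∑' i, b i) : a = b := by
  have hsum : ∀ {f : ℕ → ℝ}, (∀ i, |f i| = r ^ (i + 1)) → Summable f := fun hf =>
    Summable.of_norm_bounded ((summable_geometric_of_lt_one hr.le (by linarith)).mul_left r)
      fun i => by rw [Real.norm_eq_abs, hf, pow_succ']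
  by_contra hne
  have hex : ∃ k, a k ≠ b k := Function.ne_iff.mp hne
  classical
  set k := Nat.find hex
  set d := fun i => a i - b i
  have hdk : |d k| = 2 * r ^ (k + 1) := by
    have hk : a k = -b k :=
      (abs_eq_abs.mp ((ha k).trans (hb k).symm)).resolve_left (Nat.find_spec hex)
    simp only [d, hk, ← two_mul, neg_sub_left, abs_neg, abs_mul, abs_two, hb]
  have htail : ‖∑' i, d (i + (k + 1))‖ ≤ 2 * r ^ (k + 2) * (1 - r)⁻¹ :=
    tsum_of_norm_bounded ((hasSum_geometric_of_lt_one hr.le (by linarith)).mul_left _) fun i =>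
      calc ‖d (i + (k + 1))‖ ≤ |a (i + (k + 1))| + |b (i + (k + 1))| := abs_sub _ _
        _ = 2 * r ^ (k + 2) * r ^ i := by rw [ha, hb]; ring
  have hsplit : ∑' i, d i = d k + ∑' i, d (i + (k + 1)) := by
    rw [← ((hsum ha).sub (hsum hb)).sum_add_tsum_nat_add (k + 1), Finset.sum_range_succ,
      Finset.sum_eq_zero fun i hi => sub_eq_zero.mpr <|
        not_not.mp (Nat.find_min hex (Finset.mem_range.mp hi)), zero_add]
  have hzero : ∑' i, d i = 0 := by
    rw [(hsum ha).tsum_sub (hsum hb), hab, sub_self]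
  have hsmall : 2 * r ^ (k + 2) * (1 - r)⁻¹ < 2 * r ^ (k + 1) := by
    rw [← div_eq_mul_inv, div_lt_iff₀ (by linarith), pow_succ r (k + 1)]
    nlinarith [pow_pos hr (k + 1)]
  rw [show d k = -∑' i, d (i + (k + 1)) by linarith, abs_neg, ← Real.norm_eq_abs] at hdk
  linarith

/-- `G : Y → X` with `G ∘ F = p` is continuous because `F`, a continuous surjection from a
compact space onto a Hausdorff one, is a quotient map. -/
lemma exists_homeomorph_quot_of_factor {K X Y : Type*} [TopologicalSpace K]
    [TopologicalSpace X] [TopologicalSpace Y] [CompactSpace K] [T2Space X] [T2Space Y]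
    {p : K → X} {F : K → Y} (hp : Continuous p) (hps : Surjective p) (hF : Continuous F)
    (hFs : Surjective F) (hpF : ∀ k k', F k = F k' → p k = p k') (r : Y → Y → Prop)
    (hr : ∀ a b, r a b ↔ ∃ k k', p k = p k' ∧ F k = a ∧ F k' = b) :
    ∃ Φ : X ≃ₜ Quot r, ∀ k, Φ (p k) = Quot.mk r (F k) := by
  obtain ⟨σ, hσ⟩ := hFs.hasRightInverse
  set G : Y → X := p ∘ σ
  have hGF : ∀ k, G (F k) = p k := fun k => hpF _ _ (hσ (F k))
  have hG : Continuous G := by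
    rw [(hF.isClosedMap.isQuotientMap hF hFs).continuous_iff]
    exact hp.congr fun k => (hGF k).symm
  have hGr : ∀ a b, r a b → G a = G b := by
    intro a b hab
    obtain ⟨k, k', hkk, rfl, rfl⟩ := (hr a b).mp hab
    rw [hGF, hGF, hkk]
  have hbij : Bijective (Quot.lift G hGr) := by
    refine ⟨fun qa qb hab => ?_, fun x => ?_⟩
    · obtain ⟨a, rfl⟩ := Quot.exists_rep qa
      obtain ⟨b, rfl⟩ := Quot.exists_rep qb
      obtain ⟨k, rfl⟩ := hFs a
      obtain ⟨k', rfl⟩ := hFs b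
      exact Quot.sound ((hr _ _).mpr ⟨k, k', (hGF k).symm.trans (hab.trans (hGF k')), rfl, rfl⟩)
    · obtain ⟨k, rfl⟩ := hps x
      exact ⟨Quot.mk r (F k), hGF k⟩
  have : CompactSpace Y := hFs.compactSpace hF
  have : CompactSpace (Quot r) := Quot.compactSpace
  let Ψ := (continuous_quot_lift _ hG).homeoOfEquivCompactToT2 (f := Equiv.ofBijective _ hbij)
  exact ⟨Ψ.symm, fun k => Ψ.symm_apply_eq.mpr (hGF k).symm⟩

section Itinerary

variable {T : ℝ → ℝ} {c : ℝ}

lemma rawItin_eq_one_iff {x : ℝ} {n : ℕ} : rawItin T c x n = 1 ↔ T^[n] x = c := by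
  unfold rawItin
  split_ifs with hlt heq
  · simp [hlt.ne]
  · simpa using heq
  · simpa using heq

lemma rawItin_eq_two_iff {x : ℝ} {n : ℕ} : rawItin T c x n = 2 ↔ c < T^[n] x := by
  unfold rawItin
  split_ifs with hlt heq
  · simp [hlt.not_gt]
  · simp [heq]
  · simp [lt_of_le_of_ne (not_lt.mp hlt) (Ne.symm heq)]

lemma f2b_rawItin (x : ℝ) (n : ℕ) : f2b (rawItin T c x n) = decide (c < T^[n] x) := by
  simp only [f2b, ← rawItin_eq_two_iff (T := T)]
  rfl

lemma onesCount_succ (s : ℕ → Fin 3) (k : ℕ) :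
    onesCount s (k + 1) = onesCount s k + if s k = 2 then 1 else 0 := by
  unfold onesCount
  rw [Finset.range_add_one, Finset.filter_insert]
  split_ifs
  · rw [Finset.card_insert_of_notMem (by simp)]
  · rfl

lemma onesCount_congr {s t : ℕ → Fin 3} {k : ℕ} (h : ∀ i < k, s i = t i) :
    onesCount s k = onesCount t k := by
  unfold onesCount
  congr 1
  exact Finset.filter_congr fun i hi => by rw [h i (Finset.mem_range.mp hi)]

lemma plexLe_iff_even_of_lt {s t : ℕ → Fin 3} {k : ℕ} (hst : ∀ i < k, s i = t i)
    (hk : s k < t k) : PlexLe s t ↔ Even (onesCount s k) := by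
  refine ⟨?_, fun h => Or.inl ⟨k, hst, hk.ne, Or.inl ⟨hk, h⟩⟩⟩
  rintro (⟨m, hm, hne, h⟩ | rfl)
  · obtain rfl : m = k := by
      rcases lt_trichotomy m k with h' | h' | h'
      · exact absurd (hst m h') hne
      · exact h'
      · exact absurd (hm k h') hk.ne
    rcases h with ⟨-, h⟩ | ⟨h, -⟩
    · exact h
    · exact absurd h hk.not_gt
  · exact absurd hk (lt_irrefl _)

end Itinerary

/-- `c` is periodic: `*` (encoded as `1 : Fin 3`) occurs in the itinerary of `T c`. -/
abbrev IsCritPeriodic (T : ℝ → ℝ) (c : ℝ) : Prop := ∃ i, rawItin T c (T c) i = 1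

open Classical in
/-- The symbol that the modified kneading sequence puts in place of `*`; it is `1` exactly when
`T^n`, `n` the period of `c`, maps the points near `c` to the right of `c`. -/
noncomputable def starSide (T : ℝ → ℝ) (c : ℝ) : Bool :=
  if hq : IsCritPeriodic T c then decide (Odd (onesCount (rawItin T c (T c)) (Nat.find hq)))
  else false

open Classical in
noncomputable def critSymbol (T : ℝ → ℝ) (c : ℝ) (z : ℝ) : Bool :=
  if z = c then starSide T c else decide (c < z)

section Kneading

variable {T : ℝ → ℝ} {c : ℝ}

lemma critSymbol_of_ne {z : ℝ} (hz : z ≠ c) : critSymbol T c z = decide (c < z) := by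
  simp [critSymbol, hz]

lemma critSymbol_self : critSymbol T c c = starSide T c := by
  simp [critSymbol]

lemma starSide_eq (hq : IsCritPeriodic T c) :
    starSide T c = decide (Odd (onesCount (rawItin T c (T c)) (Nat.find hq))) :=
  dif_pos hq

lemma isCritPeriodic_of_iterate_eq {j : ℕ} (h : T^[j] (T c) = c) : IsCritPeriodic T c :=
  ⟨j, rawItin_eq_one_iff.mpr h⟩

namespace IsCritPeriodic

variable (hq : IsCritPeriodic T c)
include hq

lemma iterate_find : T^[Nat.find hq] (T c) = c :=
  rawItin_eq_one_iff.mp (Nat.find_spec hq)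

lemma isPeriodicPt : IsPeriodicPt T (Nat.find hq + 1) c :=
  hq.iterate_find

lemma minimalPeriod_eq : minimalPeriod T c = Nat.find hq + 1 := by
  refine le_antisymm (hq.isPeriodicPt.minimalPeriod_le (Nat.succ_pos _)) ?_
  have hpos := hq.isPeriodicPt.minimalPeriod_pos (Nat.succ_pos _)
  have hfix : T^[minimalPeriod T c - 1] (T c) = c := by
    rw [← iterate_succ_apply, Nat.succ_eq_add_one, Nat.sub_add_cancel hpos]
    exact isPeriodicPt_minimalPeriod T c
  have := Nat.find_min' hq (rawItin_eq_one_iff.mpr hfix)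
  omega

lemma iterate_eq_iff {j : ℕ} : T^[j] (T c) = c ↔ j % (Nat.find hq + 1) = Nat.find hq := by
  rw [← hq.isPeriodicPt.apply.iterate_mod_apply]
  have hlt : j % (Nat.find hq + 1) < Nat.find hq + 1 := Nat.mod_lt _ (Nat.succ_pos _)
  refine ⟨fun h => ?_, fun h => by rw [h]; exact hq.iterate_find⟩
  have := Nat.find_min' hq (rawItin_eq_one_iff.mpr h)
  omega

end IsCritPeriodic

open Classical in
lemma f2b_kneading (j : ℕ) : f2b (kneading T c j) = critSymbol T c (T^[j] (T c)) := by
  by_cases hq : IsCritPeriodic T c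
  · set n := Nat.find hq + 1
    let w : Fin 3 → ℕ → Fin 3 := fun b j =>
      if j % n = n - 1 then b else rawItin T c (T c) (j % n)
    have hw : ∀ b j, w b j = if T^[j] (T c) = c then b else rawItin T c (T c) j := by
      intro b j
      have hper : IsPeriodicPt T n (T c) := hq.isPeriodicPt.apply
      have hraw : rawItin T c (T c) (j % n) = rawItin T c (T c) j := by
        simp only [rawItin, hper.iterate_mod_apply]
      simp only [w, hraw, n, Nat.add_sub_cancel, ← hq.iterate_eq_iff]
    have hplex : PlexLe (w 0) (w 2) ↔ Even (onesCount (rawItin T c (T c)) (Nat.find hq)) := by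
      have hbelow : ∀ i < Nat.find hq,
          w 0 i = rawItin T c (T c) i ∧ w 2 i = rawItin T c (T c) i := fun i hi => by
        have hne : T^[i] (T c) ≠ c := fun h => Nat.find_min hq hi (rawItin_eq_one_iff.mpr h)
        simp [hw, hne]
      have hat : ∀ b, w b (Nat.find hq) = b := fun b => by simp [hw, hq.iterate_find]
      rw [plexLe_iff_even_of_lt (fun i hi => (hbelow i hi).1.trans (hbelow i hi).2.symm)
        (by simp [hat]), onesCount_congr fun i hi => (hbelow i hi).1]
    have hk : kneading T c = if PlexLe (w 0) (w 2) then w 0 else w 2 := dif_pos hq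
    rw [hk, hplex, critSymbol, starSide_eq hq]
    by_cases hc : T^[j] (T c) = c
    · by_cases hev : Even (onesCount (rawItin T c (T c)) (Nat.find hq)) <;>
        simp [hw, hc, hev, f2b, Nat.not_even_iff_odd.mp]
    · split_ifs <;> rw [hw, if_neg hc, f2b_rawItin]
  · have hk : kneading T c = rawItin T c (T c) := dif_neg hq
    have hne : T^[j] (T c) ≠ c := fun h => hq (isCritPeriodic_of_iterate_eq h)
    rw [hk, f2b_rawItin, critSymbol_of_ne hne]

end Kneading

/-- The symbol `s i` is forced by the coordinate `x (i + 1)`, except at the deepest coordinate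
equal to `c`: that is where the modified itinerary of `x` has its `*`. -/
def Admissible (T : ℝ → ℝ) (c : ℝ) (x : ℕ → ℝ) (s : ℕ → Bool) : Prop :=
  ∀ i, (x (i + 1) = c → ∃ j > i, x (j + 1) = c) → s i = critSymbol T c (x (i + 1))

section InverseLimit

variable {T : ℝ → ℝ} {c : ℝ} {x : ℕ → ℝ}

lemma iterate_apply_of_mem_invLimitSet (hx : x ∈ invLimitSet T) (i k : ℕ) :
    T^[k] (x (i + k)) = x i := by
  induction k with
  | zero => rfl
  | succ k ih => rw [iterate_succ_apply, ← add_assoc, hx.2, ih]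

lemma eq_iterate_crit_of_lt (hx : x ∈ invLimitSet T) {i j : ℕ} (hij : i < j)
    (hj : x (j + 1) = c) : x (i + 1) = T^[j - 1 - i] (T c) := by
  rw [← iterate_apply_of_mem_invLimitSet hx (i + 1) (j - i),
    show i + 1 + (j - i) = j + 1 by omega, hj, ← iterate_succ_apply,
    show (j - 1 - i).succ = j - i by omega]

lemma isPeriodicPt_crit_of_le (hx : x ∈ invLimitSet T) {i j : ℕ} (hij : i ≤ j)
    (hi : x (i + 1) = c) (hj : x (j + 1) = c) : IsPeriodicPt T (j - i) c := by
  have h := iterate_apply_of_mem_invLimitSet hx (i + 1) (j - i)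
  rwa [show i + 1 + (j - i) = j + 1 by omega, hj, hi] at h

lemma isCritPeriodic_of_lt (hx : x ∈ invLimitSet T) {i j : ℕ} (hij : i < j)
    (hi : x (i + 1) = c) (hj : x (j + 1) = c) : IsCritPeriodic T c :=
  isCritPeriodic_of_iterate_eq ((eq_iterate_crit_of_lt hx hij hj).symm.trans hi)

lemma eq_iterate_crit_of_infinite (hx : x ∈ invLimitSet T) (hinf : {i | x (i + 1) = c}.Infinite)
    {i₀ : ℕ} (hi₀ : x (i₀ + 1) = c) (hq : IsCritPeriodic T c) (i : ℕ) :
    x (i + 1) = T^[(((i₀ : ℤ) - i - 1) % (Nat.find hq + 1 : ℕ)).toNat] (T c) := by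
  obtain ⟨j, hxj, hj⟩ := hinf.exists_gt (max i i₀)
  obtain ⟨hij, hi₀j⟩ := max_lt_iff.mp hj
  have hdvd : Nat.find hq + 1 ∣ j - i₀ := by
    rw [← hq.minimalPeriod_eq, ← isPeriodicPt_iff_minimalPeriod_dvd]
    exact isPeriodicPt_crit_of_le hx hi₀j.le hi₀ hxj
  have hmod : ((i₀ : ℤ) - i - 1) % (Nat.find hq + 1 : ℕ) =
      ((j - 1 - i : ℕ) : ℤ) % (Nat.find hq + 1 : ℕ) := by
    refine Int.ModEq.eq (Int.modEq_iff_dvd.mpr ?_)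
    convert Int.natCast_dvd_natCast.mpr hdvd using 1
    omega
  rw [hmod, ← Int.natCast_mod, Int.toNat_natCast, hq.isPeriodicPt.apply.iterate_mod_apply,
    eq_iterate_crit_of_lt hx hij hxj]

lemma setOf_admissible_of_forall_exists_gt (h : ∀ i, x (i + 1) = c → ∃ j > i, x (j + 1) = c) :
    {s | Admissible T c x s} = {fun i => critSymbol T c (x (i + 1))} := by
  ext s
  simp only [mem_ofPred_eq, mem_singleton_iff, Admissible, funext_iff]
  exact forall_congr' fun i => imp_iff_right (h i)

lemma setOf_admissible_of_isGreatest {m : ℕ} (hm : IsGreatest {i | x (i + 1) = c} m) :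
    {s | Admissible T c x s} = {update (fun i => critSymbol T c (x (i + 1))) m false,
      update (fun i => critSymbol T c (x (i + 1))) m true} := by
  have hfree : ∀ i, (x (i + 1) = c → ∃ j > i, x (j + 1) = c) ↔ i ≠ m := fun i =>
    ⟨fun h him => by
      obtain ⟨j, hji, hj⟩ := h (him ▸ hm.1)
      exact (hm.2 hj).not_gt (him ▸ hji),
    fun h hi => ⟨m, lt_of_le_of_ne (hm.2 hi) h, hm.1⟩⟩
  ext s
  simp only [mem_ofPred_eq, Admissible, hfree, mem_insert_iff, mem_singleton_iff, eq_update_iff]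
  cases s m <;> simp

lemma phiSet_eq (L : ℕ → Bool) (hx : x ∈ invLimitSet T) :
    phiSet T c L x = (fun s => (x 0, psiL L s)) '' {s | Admissible T c x s} := by
  unfold phiSet
  split_ifs with hP hinf hq
  · set m := hP.1.toFinset.max' ((Set.Finite.toFinset_nonempty hP.1).mpr hP.2)
    have hm : IsGreatest {i | x (i + 1) = c} m := by
      simpa using Finset.isGreatest_max' _ ((Set.Finite.toFinset_nonempty hP.1).mpr hP.2)
    have hbase : ∀ b : Bool, (fun i => if i < m then f2b (kneading T c (m - 1 - i))
        else if i = m then b else decide (c < x (i + 1))) =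
          update (fun i => critSymbol T c (x (i + 1))) m b := fun b => funext fun i => by
      rcases lt_trichotomy i m with hi | rfl | hi
      · rw [if_pos hi, update_of_ne hi.ne, f2b_kneading, ← eq_iterate_crit_of_lt hx hi hm.1]
      · simp
      · have hne : x (i + 1) ≠ c := fun h => (hm.2 h).not_gt hi
        rw [if_neg hi.not_gt, if_neg hi.ne', update_of_ne hi.ne', critSymbol_of_ne hne]
    rw [setOf_admissible_of_isGreatest hm, image_pair, ← hbase false, ← hbase true]
  · have hi₀ : x (sInf {i | x (i + 1) = c} + 1) = c := Nat.sInf_mem hinf.nonempty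
    rw [setOf_admissible_of_forall_exists_gt fun i _ => ?_, image_singleton]
    · simp only [← eq_iterate_crit_of_infinite hx hinf hi₀ hq, f2b_kneading]
    · obtain ⟨j, hj, hij⟩ := hinf.exists_gt i
      exact ⟨j, hij, hj⟩
  · obtain ⟨i₀, hi₀⟩ := hinf.nonempty
    obtain ⟨j, hj, hij⟩ := hinf.exists_gt i₀
    exact absurd (isCritPeriodic_of_lt hx hij hi₀ hj) hq
  · have hnone : ∀ i, x (i + 1) ≠ c := fun i hi => hP ⟨not_infinite.mp hinf, i, hi⟩
    rw [setOf_admissible_of_forall_exists_gt fun i hi => absurd hi (hnone i), image_singleton]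
    simp only [critSymbol_of_ne (hnone _)]

end InverseLimit

section PsiL

lemma numOnes_succ (s : ℕ → Bool) (k : ℕ) :
    numOnes s (k + 1) = numOnes s k + if s k = true then 1 else 0 := by
  unfold numOnes
  rw [Finset.range_add_one, Finset.filter_insert]
  split_ifs
  · rw [Finset.card_insert_of_notMem (by simp)]
  · rfl

lemma eq_of_forall_even_numOnes_iff {s t : ℕ → Bool}
    (h : ∀ k, Even (numOnes s k) ↔ Even (numOnes t k)) : s = t := by
  funext k
  have hk := h (k + 1)
  rw [numOnes_succ, numOnes_succ] at hk
  cases hs : s k <;> cases ht : t k <;> simp_all [Nat.even_add_one, -Nat.not_even_iff_odd]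

lemma continuous_numOnes (k : ℕ) : Continuous fun s : ℕ → Bool => numOnes s k := by
  simp only [numOnes, Finset.card_filter]
  exact continuous_finsetSum _ fun i _ =>
    (continuous_of_discreteTopology (f := fun b : Bool => if b = true then 1 else 0)).comp
      (continuous_apply i)

noncomputable def psiTerm (L s : ℕ → Bool) (i : ℕ) : ℝ :=
  (-1 : ℝ) ^ ((numOnes L (i + 1) : ℤ) - (numOnes s (i + 1) : ℤ)) * (3 : ℝ) ^ (-(i + 1 : ℤ))

variable (L : ℕ → Bool)

lemma psiL_eq (s : ℕ → Bool) : psiL L s = 1 / 2 + ∑' i, psiTerm L s i := rfl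

lemma abs_psiTerm (s : ℕ → Bool) (i : ℕ) : |psiTerm L s i| = (1 / 3 : ℝ) ^ (i + 1) := by
  rw [psiTerm, abs_mul, abs_neg_one_zpow, one_mul, abs_of_pos (by positivity),
    show (-(i + 1 : ℤ)) = -((i + 1 : ℕ) : ℤ) by push_cast; ring, zpow_neg, zpow_natCast,
    one_div, inv_pow]

lemma psiL_injective : Injective (psiL L) := by
  intro s t h
  have hterm : psiTerm L s = psiTerm L t :=
    eq_of_tsum_eq_of_abs_eq_pow (r := 1 / 3) (by norm_num) (by norm_num) (abs_psiTerm L s)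
      (abs_psiTerm L t) (by simpa only [psiL_eq, add_right_inj] using h)
  refine eq_of_forall_even_numOnes_iff fun k => ?_
  cases k with
  | zero => simp [numOnes]
  | succ k =>
    have hk := congrFun hterm k
    have h3 : (3 : ℝ) ^ (-(k + 1 : ℤ)) ≠ 0 := by positivity
    simp only [psiTerm, mul_left_inj' h3, neg_one_zpow_eq_ite] at hk
    have hpar : Even ((numOnes L (k + 1) : ℤ) - numOnes s (k + 1)) ↔
        Even ((numOnes L (k + 1) : ℤ) - numOnes t (k + 1)) := by
      split_ifs at hk with h1 h2 h2 <;> norm_num at hk <;> simp [h1, h2]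
    simpa [Int.even_sub, Int.even_coe_nat] using hpar

lemma continuous_psiL : Continuous (psiL L) := by
  refine continuous_const.add (continuous_tsum (fun i => ?_)
    ((summable_nat_add_iff 1).mpr (summable_geometric_of_lt_one (by norm_num) (by norm_num)))
    fun i s => (abs_psiTerm L s i).le)
  exact (continuous_of_discreteTopology (f := fun m : ℕ =>
    (-1 : ℝ) ^ ((numOnes L (i + 1) : ℤ) - m) * (3 : ℝ) ^ (-(i + 1 : ℤ)))).comp
      (continuous_numOnes (i + 1))

end PsiL

def admissibleSet (T : ℝ → ℝ) (c : ℝ) : Set ((ℕ → ℝ) × (ℕ → Bool)) :=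
  {p | p.1 ∈ invLimitSet T ∧ Admissible T c p.1 p.2}

namespace IsUnimodal

variable {T : ℝ → ℝ} {c : ℝ} (hT : IsUnimodal T c)
include hT

lemma continuousOn : ContinuousOn T (Icc 0 1) := hT.1

lemma mapsTo : MapsTo T (Icc 0 1) (Icc 0 1) := hT.2.1

lemma crit_mem : c ∈ Icc (0 : ℝ) 1 := ⟨hT.2.2.2.1.le, hT.2.2.2.2.1.le⟩

lemma apply_crit_mem : T c ∈ Icc (0 : ℝ) 1 := hT.mapsTo hT.crit_mem

lemma apply_lt_apply_crit {z : ℝ} (hz : z ∈ Icc (0 : ℝ) 1) (hzc : z ≠ c) : T z < T c := by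
  rcases hzc.lt_or_gt with h | h
  · exact hT.2.2.2.2.2.1 ⟨hz.1, h.le⟩ ⟨hT.crit_mem.1, le_rfl⟩ h
  · exact hT.2.2.2.2.2.2 ⟨le_rfl, hT.crit_mem.2⟩ ⟨h.le, hz.2⟩ h

lemma zero_lt_apply_crit : 0 < T c := by
  have h := hT.apply_lt_apply_crit ⟨le_rfl, zero_le_one⟩ hT.2.2.2.1.ne
  rwa [hT.2.2.1] at h

lemma eq_crit_of_apply_eq {z : ℝ} (hz : z ∈ Icc (0 : ℝ) 1) (h : T z = T c) : z = c :=
  by_contra fun hzc => (hT.apply_lt_apply_crit hz hzc).ne h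

lemma eq_of_apply_eq {z z' : ℝ} (hz : z ∈ Icc (0 : ℝ) 1) (hz' : z' ∈ Icc (0 : ℝ) 1)
    (h : T z = T z') (hside : c < z ↔ c < z') : z = z' := by
  rcases le_or_gt z c with hzc | hzc
  · exact hT.2.2.2.2.2.1.injOn ⟨hz.1, hzc⟩ ⟨hz'.1, not_lt.mp (hside.not.mp hzc.not_gt)⟩ h
  · exact hT.2.2.2.2.2.2.injOn ⟨hzc.le, hz.2⟩ ⟨(hside.mp hzc).le, hz'.2⟩ h

lemma eq_of_admissible {x y : ℕ → ℝ} (hx : x ∈ invLimitSet T) (hy : y ∈ invLimitSet T)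
    (h0 : x 0 = y 0) {s : ℕ → Bool} (hxs : Admissible T c x s) (hys : Admissible T c y s) :
    x = y := by
  funext n
  induction n with
  | zero => exact h0
  | succ n ih =>
    have happ : T (x (n + 1)) = T (y (n + 1)) := by rw [hx.2, hy.2, ih]
    by_cases hxc : x (n + 1) = c
    · rw [hxc, hT.eq_crit_of_apply_eq (hy.1 _) (happ.symm.trans (congrArg T hxc))]
    have hyc : y (n + 1) ≠ c := fun hyc =>
      hxc (hT.eq_crit_of_apply_eq (hx.1 _) (happ.trans (congrArg T hyc)))
    refine hT.eq_of_apply_eq (hx.1 _) (hy.1 _) happ ?_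
    have hs := (hxs n fun h => absurd h hxc).symm.trans (hys n fun h => absurd h hyc)
    simpa [critSymbol_of_ne hxc, critSymbol_of_ne hyc] using hs

/-- Each visit of the orbit of `T c` to the right lap, where `T` is decreasing, reverses the
orientation of `T^[k]` near `T c`. -/
lemma eventually_iterate_lt_or_gt (hq : IsCritPeriodic T c) {k : ℕ} (hk : k ≤ Nat.find hq) :
    ∀ᶠ w in 𝓝[<] (T c), if Even (onesCount (rawItin T c (T c)) k)
      then T^[k] w < T^[k] (T c) else T^[k] (T c) < T^[k] w := by
  induction k with
  | zero =>
    filter_upwards [self_mem_nhdsWithin] with w (hw : w < T c)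
    simpa [onesCount] using hw
  | succ k ih =>
    have hIcc : Icc (0 : ℝ) 1 ∈ 𝓝[<] (T c) :=
      mem_of_superset (Ioo_mem_nhdsLT hT.zero_lt_apply_crit)
        (Ioo_subset_Icc_self.trans (Icc_subset_Icc le_rfl hT.apply_crit_mem.2))
    have hcont : Tendsto T^[k] (𝓝[<] (T c)) (𝓝 (T^[k] (T c))) :=
      ((hT.continuousOn.iterate hT.mapsTo k _ hT.apply_crit_mem).mono_of_mem_nhdsWithin
        hIcc).tendsto
    have hy : T^[k] (T c) ∈ Icc (0 : ℝ) 1 := hT.mapsTo.iterate k hT.apply_crit_mem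
    have hyc : T^[k] (T c) ≠ c := fun h => Nat.find_min hq hk (rawItin_eq_one_iff.mpr h)
    simp only [iterate_succ_apply', onesCount_succ, rawItin_eq_two_iff]
    rcases hyc.lt_or_gt with hlt | hgt
    · filter_upwards [ih (by omega), hIcc, hcont.eventually (Iio_mem_nhds hlt)] with w hw hw01 hwc
      have hu : T^[k] w ∈ Icc (0 : ℝ) 1 := hT.mapsTo.iterate k hw01
      simp only [hlt.not_gt, if_false, add_zero]
      split_ifs at hw ⊢
      · exact hT.2.2.2.2.2.1 ⟨hu.1, hwc.le⟩ ⟨hy.1, hlt.le⟩ hw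
      · exact hT.2.2.2.2.2.1 ⟨hy.1, hlt.le⟩ ⟨hu.1, hwc.le⟩ hw
    · filter_upwards [ih (by omega), hIcc, hcont.eventually (Ioi_mem_nhds hgt)] with w hw hw01 hwc
      have hu : T^[k] w ∈ Icc (0 : ℝ) 1 := hT.mapsTo.iterate k hw01
      simp only [hgt, if_true, Nat.even_add_one]
      split_ifs at hw ⊢
      · exact hT.2.2.2.2.2.2 ⟨hwc.le, hu.2⟩ ⟨hgt.le, hy.2⟩ hw
      · exact hT.2.2.2.2.2.2 ⟨hgt.le, hy.2⟩ ⟨hwc.le, hu.2⟩ hw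

/-- `T` sends the points near `c` to the left of `T c`, and `T^[n - 1]` then keeps them on the
side of `c = T^[n - 1] (T c)` given by the parity that `starSide` records. -/
lemma tendsto_iterate_crit_period (hq : IsCritPeriodic T c) :
    Tendsto T^[Nat.find hq + 1] (𝓝[Icc 0 1 \ {c}] c)
      (𝓝[{z ∈ Icc 0 1 \ {c} | c < z ↔ starSide T c = true}] c) := by
  refine tendsto_nhdsWithin_iff.mpr ⟨?_, ?_⟩
  · have h := (hT.continuousOn.iterate hT.mapsTo (Nat.find hq + 1) c hT.crit_mem).tendsto
    rw [hq.isPeriodicPt.eq] at h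
    exact h.mono_left (nhdsWithin_mono _ sdiff_subset)
  have hT' : Tendsto T (𝓝[Icc 0 1 \ {c}] c) (𝓝[<] (T c)) := by
    refine tendsto_nhdsWithin_iff.mpr ⟨?_, ?_⟩
    · exact (hT.continuousOn c hT.crit_mem).tendsto.mono_left (nhdsWithin_mono _ sdiff_subset)
    · filter_upwards [self_mem_nhdsWithin] with z hz
      exact hT.apply_lt_apply_crit hz.1 hz.2
  filter_upwards [hT'.eventually (hT.eventually_iterate_lt_or_gt hq le_rfl), self_mem_nhdsWithin]
    with z hz hz01
  rw [hq.iterate_find, ← iterate_succ_apply] at hz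
  rw [starSide_eq hq, decide_eq_true_iff]
  refine ⟨⟨hT.mapsTo.iterate _ hz01.1, ?_⟩, ?_⟩
  · split_ifs at hz
    · exact hz.ne
    · exact hz.ne'
  · split_ifs at hz with hev
    · exact iff_of_false hz.not_gt (Nat.not_odd_iff_even.mpr hev)
    · exact iff_of_true hz (Nat.not_even_iff_odd.mp hev)

lemma eventually_iterate_side {k : ℕ} (hk : 0 < k) (hper : IsPeriodicPt T k c) :
    ∀ᶠ z in 𝓝[Icc 0 1 \ {c}] c, T^[k] z ≠ c ∧ (c < T^[k] z ↔ starSide T c = true) := by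
  have hq : IsCritPeriodic T c := isCritPeriodic_of_iterate_eq (j := k - 1) <| by
    rw [← iterate_succ_apply, Nat.succ_eq_add_one, Nat.sub_add_cancel hk]
    exact hper
  obtain ⟨m, rfl⟩ : Nat.find hq + 1 ∣ k := hq.minimalPeriod_eq ▸ hper.minimalPeriod_dvd
  obtain ⟨m, rfl⟩ : ∃ m', m = m' + 1 := Nat.exists_eq_add_one.mpr (Nat.pos_of_mul_pos_left hk)
  have h := hT.tendsto_iterate_crit_period hq
  have hself := (h.mono_right (nhdsWithin_mono _ (sep_subset _ _))).iterate m
  rw [iterate_mul, iterate_succ']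
  filter_upwards [(h.comp hself).eventually self_mem_nhdsWithin] with z hz
  exact ⟨hz.1.2, hz.2⟩

lemma isClosed_invLimitSet : IsClosed (invLimitSet T) := by
  have hcont : ContinuousOn (fun x : ℕ → ℝ => fun n => T (x (n + 1)) - x n)
      (univ.pi fun _ => Icc 0 1) :=
    continuousOn_pi.mpr fun n => (hT.continuousOn.comp (continuous_apply (n + 1)).continuousOn
      fun x hx => mem_univ_pi.mp hx (n + 1)).sub (continuous_apply n).continuousOn
  convert hcont.preimage_isClosed_of_isClosed (isClosed_set_pi fun _ _ => isClosed_Icc)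
    (isClosed_singleton (x := 0)) using 1
  ext x
  simp only [invLimitSet, mem_inter_iff, mem_preimage, mem_univ_pi, mem_singleton_iff, funext_iff,
    Pi.zero_apply, sub_eq_zero, mem_ofPred_eq]

lemma eventually_critSymbol_eq {x : ℕ → ℝ} (hx : x ∈ invLimitSet T) {i : ℕ}
    (hi : x (i + 1) = c → ∃ j > i, x (j + 1) = c) :
    ∀ᶠ y in 𝓝 x, y ∈ invLimitSet T → (y (i + 1) = c → ∃ j > i, y (j + 1) = c) ∧
      critSymbol T c (y (i + 1)) = critSymbol T c (x (i + 1)) := by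
  by_cases hxc : x (i + 1) = c
  · obtain ⟨j, hji, hj⟩ := hi hxc
    have hper := isPeriodicPt_crit_of_le hx hji.le hxc hj
    have hside := eventually_nhdsWithin_iff.mp (hT.eventually_iterate_side (by omega) hper)
    filter_upwards [((continuous_apply (j + 1)).tendsto' x c hj).eventually hside] with y hy hyX
    have hyi : y (i + 1) = T^[j - i] (y (j + 1)) := by
      rw [← iterate_apply_of_mem_invLimitSet hyX (i + 1) (j - i),
        show i + 1 + (j - i) = j + 1 by omega]
    by_cases hyj : y (j + 1) = c
    · have hyc : y (i + 1) = c := by rw [hyi, hyj]; exact hper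
      exact ⟨fun _ => ⟨j, hji, hyj⟩, by rw [hyc, hxc]⟩
    · obtain ⟨hne, hlt⟩ := hy ⟨hyX.1 _, hyj⟩
      rw [← hyi] at hne hlt
      refine ⟨fun h => absurd h hne, ?_⟩
      rw [critSymbol_of_ne hne, hxc, critSymbol_self]
      exact Bool.eq_iff_iff.mpr (by simpa using hlt)
  · have hnear : ∀ᶠ z in 𝓝 (x (i + 1)), z ≠ c ∧ (c < z ↔ c < x (i + 1)) := by
      rcases Ne.lt_or_gt hxc with h | h
      · filter_upwards [Iio_mem_nhds h] with z (hz : z < c)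
        exact ⟨hz.ne, iff_of_false hz.not_gt h.not_gt⟩
      · filter_upwards [Ioi_mem_nhds h] with z (hz : c < z)
        exact ⟨hz.ne', iff_of_true hz h⟩
    filter_upwards [(continuous_apply (i + 1)).continuousAt.eventually hnear] with y hy _
    refine ⟨fun h => absurd h hy.1, ?_⟩
    rw [critSymbol_of_ne hy.1, critSymbol_of_ne hxc]
    exact decide_eq_decide.mpr hy.2

lemma isClosed_admissibleSet : IsClosed (admissibleSet T c) := by
  refine isClosed_of_closure_subset fun p hp => ?_
  have hp1 : p.1 ∈ invLimitSet T :=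
    closure_minimal (fun q hq => hq.1) (hT.isClosed_invLimitSet.preimage continuous_fst) hp
  refine ⟨hp1, fun i hi => ?_⟩
  have hsnd : ∀ᶠ q in 𝓝 p, q.2 i = p.2 i :=
    ((continuous_apply i).comp continuous_snd).continuousAt.eventually
      ((isOpen_discrete {p.2 i}).mem_nhds rfl)
  obtain ⟨q, ⟨hq1, hq2⟩, hqX, hq⟩ :=
    ((continuous_fst.continuousAt.eventually (hT.eventually_critSymbol_eq hp1 hi)).and hsnd
      |>.and_frequently (mem_closure_iff_frequently.mp hp)).exists
  obtain ⟨hqi, hsym⟩ := hq1 hqX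
  rw [← hq2, hq i hqi, hsym]

lemma isCompact_admissibleSet : IsCompact (admissibleSet T c) :=
  ((isCompact_univ_pi fun _ => isCompact_Icc).prod isCompact_univ).of_isClosed_subset
    hT.isClosed_admissibleSet fun _ hp => ⟨fun n _ => hp.1.1 n, trivial⟩

end IsUnimodal

section Assembly

variable {T : ℝ → ℝ} {c : ℝ} (L : ℕ → Bool)

lemma mem_phiSet_iff {x : ℕ → ℝ} (hx : x ∈ invLimitSet T) {a : ℝ × ℝ} :
    a ∈ phiSet T c L x ↔ ∃ s, Admissible T c x s ∧ (x 0, psiL L s) = a := by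
  rw [phiSet_eq L hx]
  rfl

lemma mem_phiImage_of_mem_admissibleSet {p : (ℕ → ℝ) × (ℕ → Bool)}
    (hp : p ∈ admissibleSet T c) : (p.1 0, psiL L p.2) ∈ phiImage T c L :=
  mem_iUnion₂.mpr ⟨p.1, hp.1, (mem_phiSet_iff L hp.1).mpr ⟨p.2, hp.2, rfl⟩⟩

def toInvLimit (p : admissibleSet T c) : invLimitSet T := ⟨p.1.1, p.2.1⟩

noncomputable def toPhiImage (p : admissibleSet T c) : phiImage T c L :=
  ⟨(p.1.1 0, psiL L p.1.2), mem_phiImage_of_mem_admissibleSet L p.2⟩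

lemma continuous_toInvLimit : Continuous (toInvLimit (T := T) (c := c)) :=
  (continuous_fst.comp continuous_subtype_val).subtype_mk _

lemma surjective_toInvLimit : Surjective (toInvLimit (T := T) (c := c)) :=
  fun x => ⟨⟨(x.1, fun i => critSymbol T c (x.1 (i + 1))), x.2, fun _ _ => rfl⟩, rfl⟩

lemma continuous_toPhiImage : Continuous (toPhiImage (T := T) (c := c) L) :=
  (((continuous_apply 0).comp (continuous_fst.comp continuous_subtype_val)).prodMk
    ((continuous_psiL L).comp (continuous_snd.comp continuous_subtype_val))).subtype_mk _

lemma surjective_toPhiImage : Surjective (toPhiImage (T := T) (c := c) L) := by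
  rintro ⟨a, ha⟩
  obtain ⟨x, hx, ha⟩ := mem_iUnion₂.mp ha
  obtain ⟨s, hs, rfl⟩ := (mem_phiSet_iff L hx).mp ha
  exact ⟨⟨(x, s), hx, hs⟩, rfl⟩

lemma IsUnimodal.toInvLimit_eq_of_toPhiImage_eq (hT : IsUnimodal T c)
    {p q : admissibleSet T c} (h : toPhiImage L p = toPhiImage L q) :
    toInvLimit p = toInvLimit q := by
  obtain ⟨h0, hs⟩ := Prod.mk.inj (congrArg Subtype.val h)
  have hs := psiL_injective L hs
  exact Subtype.ext (hT.eq_of_admissible p.2.1 q.2.1 h0 p.2.2 (hs ▸ q.2.2))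

lemma phiRel_iff (a b : phiImage T c L) : phiRel T c L a b ↔
    ∃ p q, toInvLimit p = toInvLimit q ∧ toPhiImage L p = a ∧ toPhiImage L q = b := by
  constructor
  · rintro ⟨x, hx, ha, hb⟩
    obtain ⟨s, hs, hsa⟩ := (mem_phiSet_iff L hx).mp ha
    obtain ⟨t, ht, htb⟩ := (mem_phiSet_iff L hx).mp hb
    exact ⟨⟨(x, s), hx, hs⟩, ⟨(x, t), hx, ht⟩, rfl, Subtype.ext hsa, Subtype.ext htb⟩
  · rintro ⟨p, q, hpq, rfl, rfl⟩
    have hq : q.1.1 = p.1.1 := congrArg Subtype.val hpq.symm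
    refine ⟨p.1.1, p.2.1, (mem_phiSet_iff L p.2.1).mpr ⟨p.1.2, p.2.2, rfl⟩,
      (mem_phiSet_iff L p.2.1).mpr ⟨q.1.2, hq ▸ q.2.2, ?_⟩⟩
    rw [← hq]
    rfl

end Assembly

/-- The map `φ : X → Y/∼` is a homeomorphism: there is a homeomorphism
`Φ : X ≃ₜ Y/∼` sending each `x ∈ X` to the `∼`-class of (any element of) `φ(x)`. -/
theorem stmt18 (T : ℝ → ℝ) (c : ℝ) (hT : IsUnimodal T c) (L : ℕ → Bool) :
    ∃ Φ : ↥(invLimitSet T) ≃ₜ Quot (phiRel T c L),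
      ∀ (x : ↥(invLimitSet T)) (a : ↥(phiImage T c L)),
        (a : ℝ × ℝ) ∈ phiSet T c L (x : ℕ → ℝ) → Φ x = Quot.mk _ a := by
  have := isCompact_iff_compactSpace.mp hT.isCompact_admissibleSet
  obtain ⟨Φ, hΦ⟩ := exists_homeomorph_quot_of_factor continuous_toInvLimit surjective_toInvLimit
    (continuous_toPhiImage L) (surjective_toPhiImage L)
    (fun _ _ => hT.toInvLimit_eq_of_toPhiImage_eq L) _ (phiRel_iff L)
  refine ⟨Φ, fun x a ha => ?_⟩
  obtain ⟨s, hs, hsa⟩ := (mem_phiSet_iff L x.2).mp ha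
  rw [show a = toPhiImage L ⟨(x.1, s), x.2, hs⟩ from Subtype.ext hsa.symm]
  exact hΦ ⟨(x.1, s), x.2, hs⟩
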